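/- arXiv:2312.08511 — 2 statements merged into one kernel-verified Lean document; each statement's English description precedes it below -/
import Mathlib

section
/- Let g(α) = φ(Φ^{-1}(1−α)). For all α, Δ > 0 with α + Δ < 0.05 and Δ ≤ 4α: (1/2)·Δ·Φ^{-1}(1−α) ≤ g(α + Δ) − g(α) ≤ Δ·Φ^{-1}(1−α). -/
noncomputable def phi (x : ℝ) : ℝ := (Real.sqrt (2 * Real.pi))⁻¹ * Real.exp (-x ^ 2 / 2)

noncomputable def Phi (t : ℝ) : ℝ := ∫ z in Set.Iic t, phi z

/-- The standard normal quantile function. -/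
noncomputable def Phiinv (p : ℝ) : ℝ := sInf {t : ℝ | p ≤ Phi t}

/-!
Write `Q t = ∫_t^∞ φ` (`normalTail`), so that `Φ⁻¹ (1 - Q t) = t`. With `x = Φ⁻¹(1-α)` and
`y = Φ⁻¹(1-α-Δ)` we get `Δ = ∫_y^x φ` and, since `φ' = -t φ`,
`g(α+Δ) - g(α) = φ y - φ x = ∫_y^x t φ(t) dt ∈ [y Δ, x Δ]`, so it remains to show `x ≤ 2 y`.
Mills' lower bound `t φ(t) / (1 + t²) ≤ Q t` gives `Q √2 ≥ 0.05 > α + Δ`, hence `y ≥ √2`.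
If `x > 2 y`, then `Δ ≥ ∫_y^{2y} φ ≥ y φ(2y)`, while Mills' upper bound gives
`α = Q x ≤ φ(x) / x < φ(2y) / (2y)`; with `Δ ≤ 4 α` this forces `y² < 2`.
-/

open MeasureTheory Set Filter Topology ProbabilityTheory

lemma mul_integral_le_integral_id_mul {f : ℝ → ℝ} {a b : ℝ} (hab : a ≤ b)
    (hf : ∀ t ∈ Icc a b, 0 ≤ f t) (hfi : IntervalIntegrable f volume a b) :
    a * ∫ t in a..b, f t ≤ ∫ t in a..b, t * f t := by
  rw [← intervalIntegral.integral_const_mul]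
  exact intervalIntegral.integral_mono_on hab (hfi.const_mul a)
    (hfi.continuousOn_mul continuousOn_id) fun t ht => mul_le_mul_of_nonneg_right ht.1 (hf t ht)

lemma integral_id_mul_le_mul_integral {f : ℝ → ℝ} {a b : ℝ} (hab : a ≤ b)
    (hf : ∀ t ∈ Icc a b, 0 ≤ f t) (hfi : IntervalIntegrable f volume a b) :
    ∫ t in a..b, t * f t ≤ b * ∫ t in a..b, f t := by
  rw [← intervalIntegral.integral_const_mul]
  exact intervalIntegral.integral_mono_on hab (hfi.continuousOn_mul continuousOn_id)
    (hfi.const_mul b) fun t ht => mul_le_mul_of_nonneg_right ht.2 (hf t ht)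

lemma phi_eq_gaussianPDFReal : phi = gaussianPDFReal 0 1 := by
  ext x
  simp [phi, gaussianPDFReal]

lemma phi_pos (x : ℝ) : 0 < phi x := by
  unfold phi; positivity

lemma continuous_phi : Continuous phi := by
  unfold phi; fun_prop

lemma integrable_phi : Integrable phi :=
  phi_eq_gaussianPDFReal ▸ integrable_gaussianPDFReal 0 1

lemma integral_phi : ∫ x, phi x = 1 :=
  phi_eq_gaussianPDFReal ▸ integral_gaussianPDFReal_eq_one 0 one_ne_zero

lemma hasDerivAt_phi (x : ℝ) : HasDerivAt phi (-(x * phi x)) x := by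
  have h : HasDerivAt (fun y : ℝ => -y ^ 2 / 2) (-x) x :=
    ((hasDerivAt_pow 2 x).neg.div_const 2).congr_deriv (by ring)
  exact (h.exp.const_mul (√(2 * Real.pi))⁻¹).congr_deriv (by simp only [phi]; ring)

lemma phi_antitoneOn : AntitoneOn phi (Ici 0) := by
  intro a ha b _ hab
  unfold phi
  gcongr

lemma tendsto_phi_atTop : Tendsto phi atTop (𝓝 0) := by
  have h : Tendsto (fun x : ℝ => -x ^ 2 / 2) atTop atBot :=
    (tendsto_neg_atTop_atBot.comp (tendsto_pow_atTop two_ne_zero)).atBot_div_const two_pos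
  have := (Real.tendsto_exp_atBot.comp h).const_mul (√(2 * Real.pi))⁻¹
  rwa [mul_zero] at this

lemma phi_sub_phi (a b : ℝ) : phi a - phi b = ∫ t in a..b, t * phi t := by
  have hderiv (t : ℝ) : HasDerivAt (fun t => -phi t) (t * phi t) t :=
    (hasDerivAt_phi t).neg.congr_deriv (neg_neg _)
  rw [intervalIntegral.integral_eq_sub_of_hasDerivAt (fun t _ => hderiv t)
    ((continuous_id.mul continuous_phi).intervalIntegrable a b)]
  ring

lemma integrable_mul_phi : Integrable fun z => z * phi z := by
  have := (integrable_mul_exp_neg_mul_sq (one_half_pos (α := ℝ))).const_mul (√(2 * Real.pi))⁻¹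
  refine this.congr (ae_of_all _ fun z => ?_)
  simp only [phi]
  ring_nf

noncomputable def normalTail (t : ℝ) : ℝ := ∫ z in Ioi t, phi z

lemma Phi_eq_one_sub_normalTail (t : ℝ) : Phi t = 1 - normalTail t := by
  rw [eq_sub_iff_add_eq, ← integral_phi, Phi, normalTail,
    ← setIntegral_union (Iic_disjoint_Ioi le_rfl) measurableSet_Ioi integrable_phi.integrableOn
      integrable_phi.integrableOn, Iic_union_Ioi, setIntegral_univ]

lemma normalTail_sub_normalTail (a b : ℝ) :
    normalTail a - normalTail b = ∫ t in a..b, phi t :=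
  intervalIntegral.integral_Ioi_sub_Ioi' integrable_phi.integrableOn integrable_phi.integrableOn

lemma normalTail_strictAnti : StrictAnti normalTail := fun a b hab =>
  sub_pos.1 <| (normalTail_sub_normalTail a b).symm ▸
    intervalIntegral.intervalIntegral_pos_of_pos integrable_phi.intervalIntegrable phi_pos hab

lemma continuous_normalTail : Continuous normalTail := by
  have h (t : ℝ) : normalTail t = normalTail 0 - ∫ z in (0 : ℝ)..t, phi z := by
    rw [← normalTail_sub_normalTail]; ring
  rw [funext h]
  exact continuous_const.sub (intervalIntegral.continuous_primitive
    (fun _ _ => integrable_phi.intervalIntegrable) 0)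

lemma tendsto_normalTail_atTop : Tendsto normalTail atTop (𝓝 0) := by
  have h : Tendsto (fun t => ∫ z in (0 : ℝ)..t, phi z) atTop (𝓝 (normalTail 0)) :=
    intervalIntegral_tendsto_integral_Ioi 0 integrable_phi.integrableOn tendsto_id
  have := (tendsto_const_nhds (x := normalTail 0)).sub h
  rw [sub_self] at this
  refine this.congr fun t => ?_
  rw [← normalTail_sub_normalTail]
  ring

lemma Phiinv_one_sub_normalTail (t : ℝ) : Phiinv (1 - normalTail t) = t := by
  have h : {s | 1 - normalTail t ≤ Phi s} = Ici t := by
    ext s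
    rw [mem_Ici, ← normalTail_strictAnti.le_iff_ge, mem_ofPred_eq, Phi_eq_one_sub_normalTail,
      sub_le_sub_iff_left]
  rw [Phiinv, h, csInf_Ici]

lemma exists_ge_normalTail_eq {a α : ℝ} (hα : 0 < α) (h : α ≤ normalTail a) :
    ∃ x, a ≤ x ∧ normalTail x = α := by
  obtain ⟨b, hb⟩ := ((tendsto_order.1 tendsto_normalTail_atTop).2 α hα).exists_forall_of_atTop
  obtain ⟨x, hx, rfl⟩ := intermediate_value_Icc' (le_max_left a b)
    continuous_normalTail.continuousOn ⟨(hb _ (le_max_right a b)).le, h⟩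
  exact ⟨x, hx.1, rfl⟩

lemma integral_Ioi_mul_phi (c : ℝ) : ∫ z in Ioi c, z * phi z = phi c := by
  have hderiv (t : ℝ) : HasDerivAt (fun t => -phi t) (t * phi t) t :=
    (hasDerivAt_phi t).neg.congr_deriv (neg_neg _)
  rw [integral_Ioi_of_hasDerivAt_of_tendsto' (fun t _ => hderiv t) integrable_mul_phi.integrableOn
    (by simpa using tendsto_phi_atTop.neg)]
  ring

lemma normalTail_le_phi_div {t : ℝ} (ht : 0 < t) : normalTail t ≤ phi t / t := by
  calc normalTail t ≤ ∫ z in Ioi t, z * phi z / t := by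
        refine setIntegral_mono_on integrable_phi.integrableOn
          (integrable_mul_phi.integrableOn.div_const t) measurableSet_Ioi fun z hz => ?_
        rw [le_div_iff₀ ht, mul_comm]
        exact mul_le_mul_of_nonneg_right (le_of_lt hz) (phi_pos z).le
    _ = phi t / t := by rw [integral_div, integral_Ioi_mul_phi]

lemma mul_phi_div_le_normalTail (t : ℝ) : t * phi t / (1 + t ^ 2) ≤ normalTail t := by
  set g : ℝ → ℝ := fun z => phi z * (1 - 2 / (1 + z ^ 2) ^ 2)
  have hderiv (z : ℝ) : HasDerivAt (fun w => -(w * phi w / (1 + w ^ 2))) (g z) z := by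
    have hden : HasDerivAt (fun w : ℝ => 1 + w ^ 2) (2 * z) z := by
      simpa using (hasDerivAt_pow 2 z).const_add 1
    refine (((hasDerivAt_id z).mul (hasDerivAt_phi z)).div hden (by positivity)).neg.congr_deriv ?_
    simp only [g, id, Pi.mul_apply]
    field_simp
    ring
  have hg_le (z : ℝ) : g z ≤ phi z := by
    have : 0 ≤ phi z * (2 / (1 + z ^ 2) ^ 2) := by have := phi_pos z; positivity
    simp only [g]; linarith
  have hg_int : Integrable g := by
    refine integrable_phi.mul_bdd (c := 1) (Measurable.aestronglyMeasurable (by fun_prop))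
      (ae_of_all _ fun z => ?_)
    have h1 : 0 ≤ 2 / (1 + z ^ 2) ^ 2 := by positivity
    have h2 : 2 / (1 + z ^ 2) ^ 2 ≤ 2 := div_le_self zero_le_two (one_le_pow₀ (by nlinarith))
    rw [Real.norm_eq_abs, abs_le]
    constructor <;> linarith
  have htendsto : Tendsto (fun w => -(w * phi w / (1 + w ^ 2))) atTop (𝓝 0) := by
    rw [← neg_zero]
    refine (tendsto_of_tendsto_of_tendsto_of_le_of_le' tendsto_const_nhds tendsto_phi_atTop
      ?_ ?_).neg <;> filter_upwards [eventually_ge_atTop 0] with w hw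
    · have := phi_pos w; positivity
    · rw [div_le_iff₀ (by positivity), mul_comm]
      exact mul_le_mul_of_nonneg_left (by nlinarith) (phi_pos w).le
  calc t * phi t / (1 + t ^ 2) = ∫ z in Ioi t, g z := by
        rw [integral_Ioi_of_hasDerivAt_of_tendsto' (fun z _ => hderiv z) hg_int.integrableOn
          htendsto]
        ring
    _ ≤ normalTail t := setIntegral_mono hg_int.integrableOn integrable_phi.integrableOn hg_le

lemma le_normalTail_sqrt_two : (0.05 : ℝ) ≤ normalTail √2 := by
  refine le_trans ?_ (mul_phi_div_le_normalTail √2)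
  have hphi : √2 * phi √2 = (√Real.pi * Real.exp 1)⁻¹ := by
    rw [phi, Real.sq_sqrt zero_le_two, Real.sqrt_mul zero_le_two,
      show -(2 : ℝ) / 2 = -1 by norm_num, Real.exp_neg]
    field_simp
  have hpi : √Real.pi ≤ 2 := Real.sqrt_le_iff.2 ⟨zero_le_two, by linarith [Real.pi_lt_four]⟩
  have he : Real.exp 1 ≤ 3 := by linarith [Real.exp_one_lt_d9]
  have hpos : 0 < √Real.pi * Real.exp 1 := by positivity
  rw [hphi, Real.sq_sqrt zero_le_two, le_div_iff₀ (by norm_num), le_inv_comm₀ (by norm_num) hpos]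
  nlinarith [Real.exp_pos 1]

lemma le_two_mul_of_normalTail_sub_le {x y : ℝ} (hy : √2 ≤ y)
    (h : normalTail y - normalTail x ≤ 4 * normalTail x) : x ≤ 2 * y := by
  by_contra! hxy
  have hy0 : 0 < y := lt_of_lt_of_le (by positivity) hy
  have hgap : y * phi (2 * y) ≤ normalTail y - normalTail x := calc
    y * phi (2 * y) = ∫ _ in y..2 * y, phi (2 * y) := by
      rw [intervalIntegral.integral_const, smul_eq_mul]; ring
    _ ≤ ∫ t in y..2 * y, phi t :=
      intervalIntegral.integral_mono_on (by linarith) intervalIntegrable_const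
        integrable_phi.intervalIntegrable fun t ht =>
          phi_antitoneOn (mem_Ici.2 (hy0.le.trans ht.1)) (mem_Ici.2 (by linarith)) ht.2
    _ = normalTail y - normalTail (2 * y) := (normalTail_sub_normalTail _ _).symm
    _ ≤ normalTail y - normalTail x := by linarith [normalTail_strictAnti hxy]
  have htail : normalTail x < phi (2 * y) / (2 * y) := calc
    normalTail x ≤ phi x / x := normalTail_le_phi_div (by linarith)
    _ ≤ phi (2 * y) / x := div_le_div_of_nonneg_right
      (phi_antitoneOn (mem_Ici.2 (by linarith)) (mem_Ici.2 (by linarith)) hxy.le) (by linarith)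
    _ < phi (2 * y) / (2 * y) := div_lt_div_of_pos_left (phi_pos _) (by linarith) hxy
  rw [lt_div_iff₀ (by linarith)] at htail
  have hsmall : y * y * phi (2 * y) < 2 * phi (2 * y) := by nlinarith
  have hlarge : 2 ≤ y * y :=
    Real.mul_self_sqrt zero_le_two ▸ mul_self_le_mul_self (by positivity) hy
  nlinarith [phi_pos (2 * y)]

/-- For `g(α) = φ(Φ⁻¹(1-α))`, `α + Δ < 0.05`, `0 < Δ ≤ 4α`:
`(1/2) Δ Φ⁻¹(1-α) ≤ g(α+Δ) - g(α) ≤ Δ Φ⁻¹(1-α)`. -/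
theorem access_expansion_bounds (α Δ : ℝ) (hα : 0 < α) (hΔ : 0 < Δ)
    (hsum : α + Δ < 0.05) (hΔα : Δ ≤ 4 * α) :
    (1 / 2) * Δ * Phiinv (1 - α) ≤
        phi (Phiinv (1 - (α + Δ))) - phi (Phiinv (1 - α)) ∧
      phi (Phiinv (1 - (α + Δ))) - phi (Phiinv (1 - α)) ≤ Δ * Phiinv (1 - α) := by
  have h05 := le_normalTail_sqrt_two
  obtain ⟨x, -, rfl⟩ := exists_ge_normalTail_eq hα (by linarith)
  obtain ⟨y, hy, hyΔ⟩ := exists_ge_normalTail_eq (a := √2) (α := normalTail x + Δ)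
    (by linarith) (by linarith)
  rw [← hyΔ, Phiinv_one_sub_normalTail, Phiinv_one_sub_normalTail]
  obtain rfl : Δ = normalTail y - normalTail x := by linarith
  have hyx : y ≤ x := normalTail_strictAnti.le_iff_ge.1 (by linarith)
  have hx2y : x ≤ 2 * y := le_two_mul_of_normalTail_sub_le hy hΔα
  have hphi : ∀ t ∈ Icc y x, 0 ≤ phi t := fun t _ => (phi_pos t).le
  have hlower := mul_integral_le_integral_id_mul hyx hphi integrable_phi.intervalIntegrable
  have hupper := integral_id_mul_le_mul_integral hyx hphi integrable_phi.intervalIntegrable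
  rw [normalTail_sub_normalTail] at hΔ ⊢
  rw [phi_sub_phi]
  constructor <;> nlinarith
end

section
/- In the probit model, let w = 1{⟨x, β⟩ + μ > 0} with x ~ N(0, I), β ≠ 0, and partition x = (x_s, x_t) with corresponding coefficient blocks β_s ≠ 0, β_t ≠ 0. Let γ_s = ‖β_s‖/‖β‖, γ_t = ‖β_t‖/‖β‖ (so γ_s² + γ_t² = 1), and let π(x_s) = 1{⟨x_s, β_s⟩ ≥ Φ^{-1}(1−α)·‖β_s‖} for α ∈ (0,1). Then E[w·π(x_s)] = ∫_{Φ^{-1}(1−α)}^∞ Φ((γ_s·z + μ·‖β‖^{-1})/γ_t)·φ(z) dz. -/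
open MeasureTheory ProbabilityTheory

/-!
Write `S = ⟨x_s, β_s⟩` and `T = ⟨x_t, β_t⟩`. These are independent centred Gaussians with
standard deviations `σ_s = ‖β_s‖` and `σ_t = ‖β_t‖`, so `S = σ_s Z` and `T = σ_t W` with
`Z, W` independent standard normals. Integrating out `W` first,
`P(σ_t W > -(σ_s z + μ)) = Φ((σ_s z + μ)/σ_t)`, and what remains is
`∫_{z ≥ c} Φ((σ_s z + μ)/σ_t) φ(z) dz`; dividing numerator and denominator by `‖β‖` gives
the `γ`-form.
-/

open Set NNReal

lemma gaussianPDFReal_zero_one : gaussianPDFReal 0 1 = phi := by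
  ext x
  simp [gaussianPDFReal, phi]

lemma integral_gaussianReal_zero_one (f : ℝ → ℝ) :
    ∫ x, f x ∂gaussianReal 0 1 = ∫ x, phi x * f x := by
  simp [integral_gaussianReal_eq_integral_smul one_ne_zero, gaussianPDFReal_zero_one]

lemma measureReal_gaussianReal_Iic (t : ℝ) : (gaussianReal 0 1).real (Iic t) = Phi t := by
  rw [measureReal_def, gaussianReal_apply_eq_integral _ one_ne_zero, gaussianPDFReal_zero_one,
    ENNReal.toReal_ofReal
      (setIntegral_nonneg measurableSet_Iic fun x _ => by unfold phi; positivity)]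
  rfl

lemma measureReal_gaussianReal_Ioi (a : ℝ) : (gaussianReal 0 1).real (Ioi a) = Phi (-a) := by
  have hneg : (gaussianReal 0 1).map (fun x => -x) = gaussianReal 0 1 := by
    simpa using gaussianReal_map_neg (μ := 0) (v := 1)
  rw [← hneg, map_measureReal_apply (by fun_prop) measurableSet_Ioi]
  change (gaussianReal 0 1).real (-Ioi a) = _
  have := nullSingletonClass_gaussianReal (μ := 0) one_ne_zero
  rw [neg_Ioi, ← measureReal_gaussianReal_Iic, measureReal_congr Iio_ae_eq_Iic]

lemma integral_ite_pos_add_mul_gaussianReal (a : ℝ) {σ : ℝ} (hσ : 0 < σ) :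
    ∫ w, (if 0 < a + w * σ then (1 : ℝ) else 0) ∂gaussianReal 0 1 = Phi (a / σ) := by
  have hset : {w : ℝ | 0 < a + w * σ} = Ioi (-(a / σ)) := by
    ext w
    rw [mem_Ioi, ← neg_div, div_lt_iff₀ hσ]
    exact ⟨fun (h : 0 < a + w * σ) => by linarith, fun h => show 0 < a + w * σ by linarith⟩
  rw [← neg_neg (a / σ), ← measureReal_gaussianReal_Ioi, ← hset,
    ← integral_indicator_one (measurableSet_lt measurable_const (by fun_prop))]
  rfl

lemma gaussianReal_zero_eq_map_mul_sqrt (v : ℝ≥0) :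
    gaussianReal 0 v = (gaussianReal 0 1).map (· * √v) := by
  rw [gaussianReal_map_mul_const, mul_zero, mul_one]
  congr
  ext
  simp

lemma map_pi_gaussianReal_sum_mul {ι : Type*} [Fintype ι] (β : ι → ℝ) :
    (Measure.pi fun _ : ι => gaussianReal 0 1).map (fun x => ∑ i, x i * β i)
      = gaussianReal 0 ⟨∑ i, β i ^ 2, by positivity⟩ := by
  set L : StrongDual ℝ (EuclideanSpace ℝ ι) := innerSL ℝ (WithLp.toLp 2 β)
  have hL : (fun x : ι → ℝ => ∑ i, x i * β i) = L ∘ WithLp.toLp 2 := by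
    ext x
    simp [L, EuclideanSpace.inner_eq_star_dotProduct, dotProduct, mul_comm]
  rw [hL, ← Measure.map_map L.continuous.measurable (by fun_prop), map_pi_eq_stdGaussian,
    IsGaussian.map_eq_gaussianReal, integral_strongDual_stdGaussian, variance_dual_stdGaussian,
    innerSL_apply_norm, EuclideanSpace.real_norm_sq_eq]
  congr
  exact Real.toNNReal_of_nonneg (by positivity)

lemma integral_comp_prodMap {α β γ δ E : Type*} [MeasurableSpace α] [MeasurableSpace β]
    [MeasurableSpace γ] [MeasurableSpace δ] [NormedAddCommGroup E] [NormedSpace ℝ E]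
    {μ : Measure α} {ν : Measure γ} [SFinite μ] [SFinite ν] {f : α → β} {g : γ → δ}
    (hf : Measurable f) (hg : Measurable g) {F : β × δ → E}
    (hF : AEStronglyMeasurable F ((μ.map f).prod (ν.map g))) :
    ∫ p, F (f p.1, g p.2) ∂μ.prod ν = ∫ q, F q ∂(μ.map f).prod (ν.map g) := by
  rw [Measure.map_prod_map _ _ hf hg] at hF ⊢
  exact (integral_map (hf.prodMap hg).aemeasurable hF).symm

lemma sum_sq_pos_of_ne_zero {ι : Type*} [Fintype ι] {β : ι → ℝ} (hβ : β ≠ 0) :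
    0 < ∑ i, β i ^ 2 := by
  obtain ⟨i, hi⟩ := Function.ne_iff.1 hβ
  exact Finset.sum_pos' (fun j _ => sq_nonneg (β j)) ⟨i, Finset.mem_univ i, sq_pos_of_ne_zero hi⟩

/-- `w · π` as a function of the two scores `q = (⟨x_s, β_s⟩, ⟨x_t, β_t⟩)`, with targeting
threshold `b`. -/
noncomputable def probitPayoff (μ b : ℝ) (q : ℝ × ℝ) : ℝ :=
  (if 0 < q.1 + q.2 + μ then 1 else 0) * (if b ≤ q.1 then 1 else 0)

lemma measurable_probitPayoff (μ b : ℝ) : Measurable (probitPayoff μ b) :=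
  (Measurable.ite (measurableSet_lt measurable_const (by fun_prop)) measurable_const
    measurable_const).mul
    (Measurable.ite (measurableSet_le measurable_const (by fun_prop)) measurable_const
      measurable_const)

lemma integral_probitPayoff_standard (c μ : ℝ) {σs σt : ℝ} (hσs : 0 < σs) (hσt : 0 < σt) :
    ∫ q : ℝ × ℝ, probitPayoff μ (c * σs) (q.1 * σs, q.2 * σt)
        ∂(gaussianReal 0 1).prod (gaussianReal 0 1)
      = ∫ z in Ioi c, Phi ((z * σs + μ) / σt) * phi z := by
  have hint : Integrable (fun q : ℝ × ℝ => probitPayoff μ (c * σs) (q.1 * σs, q.2 * σt))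
      ((gaussianReal 0 1).prod (gaussianReal 0 1)) := by
    refine Integrable.of_bound
      ((measurable_probitPayoff μ _).comp (by fun_prop)).aestronglyMeasurable 1
      (ae_of_all _ fun q => ?_)
    simp only [probitPayoff]
    split_ifs <;> norm_num
  have hinner : ∀ z : ℝ, ∫ w, probitPayoff μ (c * σs) (z * σs, w * σt) ∂gaussianReal 0 1
      = Phi ((z * σs + μ) / σt) * (if c ≤ z then 1 else 0) := fun z => by
    have hpayoff : ∀ w, probitPayoff μ (c * σs) (z * σs, w * σt)
        = (if 0 < z * σs + μ + w * σt then 1 else 0) * (if c ≤ z then 1 else 0) := fun w => by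
      simp only [probitPayoff, add_right_comm _ _ μ, mul_le_mul_iff_of_pos_right hσs]
    simp_rw [hpayoff, integral_mul_const, integral_ite_pos_add_mul_gaussianReal _ hσt]
  rw [integral_prod _ hint]
  simp_rw [hinner]
  rw [integral_gaussianReal_zero_one, ← integral_Ici_eq_integral_Ioi,
    ← integral_indicator measurableSet_Ici]
  congr with z
  by_cases hz : c ≤ z <;> simp [hz, mul_comm]

lemma integral_probitPayoff_gaussianReal (c μ : ℝ) {vs vt : ℝ≥0} (hvs : vs ≠ 0) (hvt : vt ≠ 0) :
    ∫ q, probitPayoff μ (c * √vs) q ∂(gaussianReal 0 vs).prod (gaussianReal 0 vt)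
      = ∫ z in Ioi c, Phi ((z * √vs + μ) / √vt) * phi z := by
  rw [gaussianReal_zero_eq_map_mul_sqrt vs, gaussianReal_zero_eq_map_mul_sqrt vt,
    ← integral_comp_prodMap (by fun_prop) (by fun_prop)
      (measurable_probitPayoff μ _).aestronglyMeasurable]
  exact integral_probitPayoff_standard c μ (by positivity) (by positivity)

theorem value_probit_policy_general (ds dt : ℕ) (βs : Fin ds → ℝ) (βt : Fin dt → ℝ)
    (μ α : ℝ) (hβs : βs ≠ 0) (hβt : βt ≠ 0) :
    (∫ p : (Fin ds → ℝ) × (Fin dt → ℝ),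
        (if 0 < (∑ i, p.1 i * βs i) + (∑ j, p.2 j * βt j) + μ then (1 : ℝ) else 0) *
          (if Phiinv (1 - α) * Real.sqrt (∑ i, (βs i) ^ 2) ≤ ∑ i, p.1 i * βs i
            then (1 : ℝ) else 0)
        ∂((Measure.pi fun _ : Fin ds => gaussianReal 0 1).prod
            (Measure.pi fun _ : Fin dt => gaussianReal 0 1)))
      = ∫ z in Set.Ioi (Phiinv (1 - α)),
          Phi (((Real.sqrt (∑ i, (βs i) ^ 2) / Real.sqrt ((∑ i, (βs i) ^ 2) + ∑ j, (βt j) ^ 2)) * z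
                + μ * (Real.sqrt ((∑ i, (βs i) ^ 2) + ∑ j, (βt j) ^ 2))⁻¹)
              / (Real.sqrt (∑ j, (βt j) ^ 2) / Real.sqrt ((∑ i, (βs i) ^ 2) + ∑ j, (βt j) ^ 2)))
            * phi z := by
  have hvs : (⟨∑ i, βs i ^ 2, by positivity⟩ : ℝ≥0) ≠ 0 :=
    ne_of_gt (NNReal.coe_pos.1 (sum_sq_pos_of_ne_zero hβs))
  have hvt : (⟨∑ j, βt j ^ 2, by positivity⟩ : ℝ≥0) ≠ 0 :=
    ne_of_gt (NNReal.coe_pos.1 (sum_sq_pos_of_ne_zero hβt))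
  have hF : Measurable fun x : Fin ds → ℝ => ∑ i, x i * βs i := by fun_prop
  have hG : Measurable fun y : Fin dt → ℝ => ∑ j, y j * βt j := by fun_prop
  refine (integral_comp_prodMap hF hG
    (measurable_probitPayoff μ (Phiinv (1 - α) * √(∑ i, βs i ^ 2))).aestronglyMeasurable).trans ?_
  rw [map_pi_gaussianReal_sum_mul, map_pi_gaussianReal_sum_mul]
  refine (integral_probitPayoff_gaussianReal _ _ hvs hvt).trans ?_
  have hσ : √((∑ i, βs i ^ 2) + ∑ j, βt j ^ 2) ≠ 0 := by
    have := sum_sq_pos_of_ne_zero hβs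
    positivity
  congr 1 with z
  congr 2
  change (z * √(∑ i, βs i ^ 2) + μ) / √(∑ j, βt j ^ 2) = _
  field_simp

/-- Value of the optimal probit targeting policy: with
`w = 1{⟨x_s, β_s⟩ + ⟨x_t, β_t⟩ + μ > 0}` and
`π(x_s) = 1{⟨x_s, β_s⟩ ≥ Φ⁻¹(1-α)‖β_s‖}`, where `γ_s = ‖β_s‖/‖β‖` and
`γ_t = ‖β_t‖/‖β‖`,
`E[w π(x_s)] = ∫_{Φ⁻¹(1-α)}^∞ Φ((γ_s z + μ ‖β‖⁻¹)/γ_t) φ(z) dz`. -/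
theorem value_probit_policy (ds dt : ℕ) (βs : Fin ds → ℝ) (βt : Fin dt → ℝ)
    (μ α : ℝ) (hβs : βs ≠ 0) (hβt : βt ≠ 0) (hα : α ∈ Set.Ioo (0 : ℝ) 1) :
    (∫ p : (Fin ds → ℝ) × (Fin dt → ℝ),
        (if 0 < (∑ i, p.1 i * βs i) + (∑ j, p.2 j * βt j) + μ then (1 : ℝ) else 0) *
          (if Phiinv (1 - α) * Real.sqrt (∑ i, (βs i) ^ 2) ≤ ∑ i, p.1 i * βs i
            then (1 : ℝ) else 0)
        ∂((Measure.pi fun _ : Fin ds => gaussianReal 0 1).prod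
            (Measure.pi fun _ : Fin dt => gaussianReal 0 1)))
      = ∫ z in Set.Ioi (Phiinv (1 - α)),
          Phi (((Real.sqrt (∑ i, (βs i) ^ 2) / Real.sqrt ((∑ i, (βs i) ^ 2) + ∑ j, (βt j) ^ 2)) * z
                + μ * (Real.sqrt ((∑ i, (βs i) ^ 2) + ∑ j, (βt j) ^ 2))⁻¹)
              / (Real.sqrt (∑ j, (βt j) ^ 2) / Real.sqrt ((∑ i, (βs i) ^ 2) + ∑ j, (βt j) ^ 2)))
            * phi z :=
  value_probit_policy_general ds dt βs βt μ α hβs hβt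
end
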